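/- Let θ ∈ ℤ_p be neither zero nor a negative rational integer, and let θ' ∈ ℚ ∩ ℤ_p be the unique element such that pθ'−θ is an integer in [0, p−1]. Let μ and s be positive integers, m a nonnegative integer, and a an integer with 0 ≤ a ≤ p−1. Let ρ(x) := 1 if x > 0 and ρ(x) := 0 if x ≤ 0. Then there exists u ∈ 1 + [p^{s+1}]_q·R such that, in Q, C_θ(a+μp+mp^{s+1})/φ(C_{θ'}(μ+mp^s)) = u · (C_θ(mp^{s+1})/φ(C_{θ'}(mp^s))) · (C_θ(a+μp)/φ(C_{θ'}(μ))) · (φ(1 + q^{θ'+μ}·[mp^s]_q/[θ'+μ]_q))^{ρ(a+θ−pθ')}. (All q-numbers appearing are nonzero, since θ and θ' are not nonpositive integers.) -/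

import Mathlib

/- Setting (following Dwork-type q-congruences / q-hypergeometric papers):
`p` is an odd prime, `R = ℤ_p[[q−1]]` is implemented as `PowerSeries ℤ_[p]`, the power-series
variable `PowerSeries.X` standing for `q − 1`. -/

noncomputable section
open PowerSeries
namespace QDwork

variable (p : ℕ) [Fact p.Prime]

/-- `R = ℤ_p[[q−1]]`. -/
abbrev R : Type := PowerSeries ℤ_[p]

/-- `q = 1 + (q−1) ∈ R`. -/
def qq : R p := 1 + PowerSeries.X

/-- `q^a = Σ_{i≥0} binom(a,i)(q−1)^i ∈ R` for `a ∈ ℤ_p`, using the p-adically interpolated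
binomial coefficients `Ring.choose` (`ℤ_p` is a binomial ring). -/
def qpow (a : ℤ_[p]) : R p := PowerSeries.mk fun i => Ring.choose a i

/-- The q-number `[a]_q = (q^a−1)/(q−1) = Σ_{i≥1} binom(a,i)(q−1)^{i−1} ∈ R` for `a ∈ ℤ_p`. -/
def qnum (a : ℤ_[p]) : R p := PowerSeries.mk fun i => Ring.choose a (i + 1)

/-- The q-number `[n]_q = 1 + q + ⋯ + q^{n−1} ∈ R` of a natural number `n`. -/
def qnat (n : ℕ) : R p := ∑ i ∈ Finset.range n, qq p ^ i

/-- The Frobenius endomorphism `φ` of `R = ℤ_p[[q−1]]`: the ring endomorphism fixing `ℤ_p`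
with `φ(q) = q^p`, i.e. the substitution `f(q−1) ↦ f(q^p−1)` (legitimate since `q^p−1` has
zero constant term), described here through its coefficients. -/
def phiR (f : R p) : R p :=
  PowerSeries.mk fun n => ∑ i ∈ Finset.range (n + 1),
    PowerSeries.coeff (R := ℤ_[p]) i f * PowerSeries.coeff (R := ℤ_[p]) n ((qq p ^ p - 1) ^ i)

/-- `Q = Frac(R)`. -/
abbrev Q : Type := FractionRing (R p)

/-- The canonical injection `R → Q`. -/
def ι : R p →+* Q p := algebraMap (R p) (Q p)

/-- `q ∈ Q`. -/
def qQ : Q p := ι p (qq p)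

/-- The extension of the Frobenius `φ` to `Q = Frac(R)` (computed via a choice of a fraction
representation `x = r/s`, `φ(x) = φ(r)/φ(s)`). -/
def phiQ (x : Q p) : Q p :=
  ι p (phiR p (IsLocalization.sec (nonZeroDivisors (R p)) x).1) /
    ι p (phiR p ((IsLocalization.sec (nonZeroDivisors (R p)) x).2 : R p))

/-- `[a]_q` viewed in `Q`, for `a ∈ ℤ_p`. -/
def qnumQ (a : ℤ_[p]) : Q p := ι p (qnum p a)

/-- `[n]_q` viewed in `Q`, for a natural number `n`. -/
def qnatQ (n : ℕ) : Q p := ι p (qnat p n)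

/-- `C_θ(n) = ∏_{ν=0}^{n−1} [θ+ν]_q ∈ R`. -/
def Cq (θ : ℤ_[p]) (n : ℕ) : R p := ∏ ν ∈ Finset.range n, qnum p (θ + (ν : ℤ_[p]))


/-!
Split `C_θ(a+μp+mp^{s+1}) = C_θ(mp^{s+1}) · ∏_{ν<a+μp} [θ+mp^{s+1}+ν]_q` and sort the factors by
the residue of `ν` modulo `p`. If `ν ≢ a₀`, then `θ+ν` is a `p`-adic unit, hence so is `[θ+ν]_q`,
and `[θ+ν+mp^{s+1}]_q = [θ+ν]_q + q^{θ+ν}[mp^{s+1}]_q` lies in `[θ+ν]_q (1 + [p^{s+1}]_q R)`.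
If `ν = a₀+pk`, then `θ+mp^{s+1}+ν = p(θ'+mp^s+k)`, and `[px]_q = [p]_q φ([x]_q)`; there are
`μ + ρ(a−a₀)` such factors, and they assemble to `φ(C_{θ'+mp^s}(μ))`, times `φ([θ'+mp^s+μ]_q)`
when `a > a₀`. The same decomposition of `C_θ(a+μp)` leaves only the unit factors in the quotient.
-/

open Finset

lemma prod_range_eq_prod_filter_mul_prod_residue {M : Type*} [CommMonoid M]
    (f : ℕ → M) {d a₀ A B : ℕ} (ha₀ : a₀ < d) (hB : ∀ k, a₀ + d * k < A ↔ k < B) :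
    ∏ ν ∈ range A, f ν = (∏ ν ∈ (range A).filter (· % d ≠ a₀), f ν) *
      ∏ k ∈ range B, f (a₀ + d * k) := by
  have hresidue : (range A).filter (fun ν => ¬ν % d ≠ a₀) = (range B).image (a₀ + d * ·) := by
    ext ν
    simp only [mem_filter, mem_range, not_not, mem_image]
    constructor
    · rintro ⟨hν, rfl⟩
      exact ⟨ν / d, (hB _).mp (by rwa [Nat.mod_add_div]), Nat.mod_add_div ν d⟩
    · rintro ⟨k, hk, rfl⟩
      exact ⟨(hB k).mpr hk, by rw [Nat.add_mul_mod_self_left, Nat.mod_eq_of_lt ha₀]⟩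
  rw [← prod_filter_mul_prod_filter_not (range A) (· % d ≠ a₀), hresidue,
    prod_image fun k _ l _ h => Nat.eq_of_mul_eq_mul_left (by omega) (Nat.add_left_cancel h)]

lemma exists_prod_eq_prod_mul_one_add {A ι : Type*} [CommRing A] (c : A) (s : Finset ι)
    (f g : ι → A) (h : ∀ i ∈ s, ∃ r, f i = g i * (1 + c * r)) :
    ∃ r, ∏ i ∈ s, f i = (∏ i ∈ s, g i) * (1 + c * r) := by
  choose! r hr using h
  rw [prod_congr rfl hr, prod_mul_distrib]
  obtain ⟨t, ht⟩ : ∃ t, ∏ i ∈ s, (1 + c * r i) = 1 + c * t :=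
    prod_induction _ (fun x => ∃ t, x = 1 + c * t)
      (fun _ _ ⟨t₁, h₁⟩ ⟨t₂, h₂⟩ => ⟨t₁ + t₂ + c * t₁ * t₂, by rw [h₁, h₂]; ring⟩)
      ⟨0, by ring⟩ fun i _ => ⟨r i, rfl⟩
  exact ⟨t, by rw [ht]⟩

lemma residue_lt_iff {d a a₀ : ℕ} (μ : ℕ) (ha : a < d) (ha₀ : a₀ < d) (k : ℕ) :
    a₀ + d * k < a + μ * d ↔ k < μ + if a₀ < a then 1 else 0 := by
  rcases lt_trichotomy k μ with hk | rfl | hk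
  · have : d * (k + 1) ≤ d * μ := Nat.mul_le_mul_left d hk
    split_ifs <;> constructor <;> intro <;> nlinarith
  · split_ifs <;> constructor <;> intro <;> nlinarith
  · have : d * (μ + 1) ≤ d * k := Nat.mul_le_mul_left d hk
    split_ifs <;> constructor <;> intro <;> nlinarith

lemma qpow_eq_binomialSeries (a : ℤ_[p]) : qpow p a = binomialSeries ℤ_[p] a := by
  ext n
  simp [qpow]

lemma qpow_add (a b : ℤ_[p]) : qpow p (a + b) = qpow p a * qpow p b := by
  simp only [qpow_eq_binomialSeries, binomialSeries_add]

lemma qpow_natCast (k : ℕ) : qpow p k = qq p ^ k := by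
  rw [qpow_eq_binomialSeries, binomialSeries_nat, qq]

lemma X_mul_qnum (a : ℤ_[p]) : X * qnum p a = qpow p a - 1 := by
  ext (_ | n)
  · simp [qnum, qpow]
  · simp [qnum, qpow, coeff_succ_X_mul, coeff_one]

lemma X_mul_qnat (n : ℕ) : X * qnat p n = qq p ^ n - 1 := by
  simpa [qnat, qq] using mul_geom_sum (qq p) n

lemma qnum_natCast (k : ℕ) : qnum p k = qnat p k :=
  mul_left_cancel₀ X_ne_zero (by rw [X_mul_qnum, X_mul_qnat, qpow_natCast])

lemma qnum_add (a b : ℤ_[p]) : qnum p (a + b) = qnum p a + qpow p a * qnum p b := by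
  refine mul_left_cancel₀ X_ne_zero ?_
  rw [mul_add, mul_left_comm, X_mul_qnum, X_mul_qnum, X_mul_qnum, qpow_add]
  ring

@[simp] lemma constantCoeff_qnum (a : ℤ_[p]) : constantCoeff (qnum p a) = a := by
  simp [qnum, ← coeff_zero_eq_constantCoeff_apply]

lemma qnum_ne_zero {a : ℤ_[p]} (ha : a ≠ 0) : qnum p a ≠ 0 :=
  fun h => ha (by simpa using congrArg constantCoeff h)

lemma isUnit_qnum {a : ℤ_[p]} (ha : IsUnit a) : IsUnit (qnum p a) := by
  rwa [isUnit_iff_constantCoeff, constantCoeff_qnum]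

lemma qnat_mul (k l : ℕ) : qnat p (k * l) = qnat p k * ∑ j ∈ range l, (qq p ^ k) ^ j := by
  refine mul_left_cancel₀ X_ne_zero ?_
  rw [X_mul_qnat, ← mul_assoc, X_mul_qnat, mul_geom_sum, pow_mul]

lemma hasSubst_qq_pow_sub_one : HasSubst (qq p ^ p - 1) :=
  HasSubst.of_constantCoeff_zero' (by simp [qq])

lemma phiR_eq_subst (f : R p) : phiR p f = f.subst (qq p ^ p - 1) := by
  ext n
  rw [coeff_subst' (hasSubst_qq_pow_sub_one p),
    finsum_eq_sum_of_support_subset _ (s := range (n + 1))]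
  · simp [phiR, smul_eq_mul]
  · intro d hd
    rw [Function.mem_support] at hd
    simp only [coe_range, Set.mem_Iio]
    by_contra h
    apply hd
    rw [← X_mul_qnat, mul_pow, coeff_X_pow_mul', if_neg (by omega), smul_zero]

def phi : R p →+* R p := (substAlgHom (hasSubst_qq_pow_sub_one p)).toRingHom

lemma phi_apply (f : R p) : phi p f = phiR p f := by
  rw [phiR_eq_subst, phi, AlgHom.toRingHom_eq_coe, AlgHom.coe_toRingHom, coe_substAlgHom]

lemma phiR_mul (f g : R p) : phiR p (f * g) = phiR p f * phiR p g := by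
  simp only [← phi_apply, map_mul]

lemma phiR_pow (f : R p) (n : ℕ) : phiR p (f ^ n) = phiR p f ^ n := by
  simp only [← phi_apply, map_pow]

lemma phiR_X : phiR p X = qq p ^ p - 1 := by
  rw [phiR_eq_subst, subst_X (hasSubst_qq_pow_sub_one p)]

lemma phiR_qq : phiR p (qq p) = qq p ^ p := by
  have hq : qq p = 1 + X := rfl
  rw [← phi_apply, hq, map_add, map_one, phi_apply, phiR_X, hq]
  ring

@[simp] lemma constantCoeff_phiR (f : R p) : constantCoeff (phiR p f) = constantCoeff f := by
  rw [← coeff_zero_eq_constantCoeff_apply, ← coeff_zero_eq_constantCoeff_apply]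
  simp [phiR]

lemma phiR_ne_zero {f : R p} (hf : f ≠ 0) : phiR p f ≠ 0 := by
  have hp : (p : ℤ_[p]) ≠ 0 := Nat.cast_ne_zero.mpr (Fact.out : p.Prime).ne_zero
  have hg : constantCoeff (divXPowOrder f) ≠ 0 :=
    constantCoeff_divXPowOrder_eq_zero_iff.not.mpr hf
  rw [← X_pow_order_mul_divXPowOrder (f := f), phiR_mul, phiR_pow, phiR_X, ← X_mul_qnat]
  refine mul_ne_zero (pow_ne_zero _ (mul_ne_zero X_ne_zero fun h => hp ?_)) fun h => hg ?_
  · simpa [qnat, qq] using congrArg constantCoeff h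
  · simpa using congrArg constantCoeff h

lemma phiR_qpow (a : ℤ_[p]) : phiR p (qpow p a) = qpow p (p * a) := by
  ext n
  suffices h : (fun a => coeff n (phiR p (qpow p a))) = fun a => coeff n (qpow p (p * a)) from
    congrFun h a
  refine PadicInt.denseRange_natCast.equalizer ?_ ?_ (funext fun k => ?_)
  · simp only [phiR, coeff_mk, qpow]
    fun_prop
  · simp only [qpow, coeff_mk]
    exact (PadicInt.continuous_choose n).comp (continuous_const.mul continuous_id)
  · simp only [Function.comp_apply]
    rw [qpow_natCast, ← Nat.cast_mul, qpow_natCast, phiR_pow, phiR_qq, pow_mul]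

lemma qnum_natCast_mul (a : ℤ_[p]) : qnum p (p * a) = qnat p p * phiR p (qnum p a) := by
  refine mul_left_cancel₀ X_ne_zero ?_
  rw [X_mul_qnum, ← mul_assoc, X_mul_qnat, ← phiR_X, ← phiR_mul, X_mul_qnum, ← phi_apply,
    map_sub, map_one, phi_apply, phiR_qpow]

lemma ι_ne_zero {x : R p} (hx : x ≠ 0) : ι p x ≠ 0 :=
  (map_ne_zero_iff _ (IsFractionRing.injective (R p) (Q p))).mpr hx

lemma ι_phiR_ne_zero {x : R p} (hx : x ≠ 0) : ι p (phiR p x) ≠ 0 :=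
  ι_ne_zero p (phiR_ne_zero p hx)

lemma phiQ_div (x y : R p) (hy : y ≠ 0) :
    phiQ p (ι p x / ι p y) = ι p (phiR p x) / ι p (phiR p y) := by
  set z := ι p x / ι p y
  set r := IsLocalization.sec (nonZeroDivisors (R p)) z
  have hr : z * ι p r.2 = ι p r.1 := IsLocalization.sec_spec _ z
  have hcross : r.1 * y = x * r.2 := by
    refine IsFractionRing.injective (R p) (Q p) ?_
    rw [map_mul, map_mul, ← ι, ← hr, mul_right_comm, div_mul_cancel₀ _ (ι_ne_zero p hy)]
  rw [phiQ, div_eq_div_iff (ι_ne_zero p (phiR_ne_zero p (nonZeroDivisors.coe_ne_zero r.2)))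
    (ι_ne_zero p (phiR_ne_zero p hy)), ← map_mul, ← map_mul, ← phiR_mul, ← phiR_mul, hcross]

lemma Cq_add (θ : ℤ_[p]) (m n : ℕ) : Cq p θ (m + n) = Cq p θ m * Cq p (θ + m) n := by
  simp only [Cq, prod_range_add, Nat.cast_add, add_assoc]

lemma Cq_ne_zero {θ : ℤ_[p]} (hθ : ∀ n : ℕ, θ + n ≠ 0) (n : ℕ) : Cq p θ n ≠ 0 :=
  prod_ne_zero_iff.mpr fun ν _ => qnum_ne_zero p (hθ ν)

lemma Cq_eq_qnum_pow (θ : ℤ_[p]) {n : ℕ} (hn : n ≤ 1) : Cq p θ n = qnum p θ ^ n := by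
  interval_cases n <;> simp [Cq]

lemma qnum_add_natCast_mul {x : ℤ_[p]} (hx : IsUnit x) (k n : ℕ) :
    ∃ r, qnum p (x + (k * n : ℕ)) = qnum p x * (1 + qnat p n * r) := by
  obtain ⟨w, hw⟩ : qnat p n ∣ qnat p (k * n) := by
    rw [mul_comm, qnat_mul]
    exact dvd_mul_right _ _
  obtain ⟨v, hv⟩ := (isUnit_qnum p hx).exists_right_inv
  refine ⟨v * qpow p x * w, ?_⟩
  rw [qnum_add, qnum_natCast, hw]
  linear_combination (-(qnat p n * qpow p x * w)) * hv

lemma isUnit_add_natCast {θ θ' : ℤ_[p]} {a₀ : ℕ} (hθ' : p * θ' - θ = a₀) (ha₀ : a₀ < p)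
    {ν : ℕ} (hν : ν % p ≠ a₀) : IsUnit (θ + ν) := by
  by_contra hunit
  have hdvd : (p : ℤ_[p]) ∣ θ + ν :=
    (PadicInt.norm_lt_one_iff_dvd _).mp (PadicInt.mem_nonunits.mp hunit)
  have hdvdℤ : (p : ℤ) ∣ (ν - a₀ : ℤ) := by
    refine (PadicInt.norm_int_lt_one_iff_dvd _).mp ((PadicInt.norm_lt_one_iff_dvd _).mpr ?_)
    convert dvd_sub hdvd (dvd_mul_right (p : ℤ_[p]) θ') using 1
    push_cast
    linear_combination hθ'
  exact hν (Eq.trans (Nat.modEq_iff_dvd.mpr hdvdℤ).symm (Nat.mod_eq_of_lt ha₀))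

lemma add_natCast_ne_zero_of_mul_sub {θ θ' : ℤ_[p]} {a₀ : ℕ} (hθ' : p * θ' - θ = a₀)
    (hθ : ∀ n : ℕ, θ + n ≠ 0) (n : ℕ) : θ' + n ≠ 0 := fun h => hθ (a₀ + p * n) (by
  push_cast
  linear_combination -hθ' + (p : ℤ_[p]) * h)

lemma exists_prod_filter_qnum_add_natCast_mul {θ θ' : ℤ_[p]} {a₀ : ℕ}
    (hθ' : p * θ' - θ = a₀) (ha₀ : a₀ < p) (A k n : ℕ) :
    ∃ r, ∏ ν ∈ (range A).filter (· % p ≠ a₀), qnum p (θ + (k * n : ℕ) + ν) =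
      (∏ ν ∈ (range A).filter (· % p ≠ a₀), qnum p (θ + ν)) * (1 + qnat p n * r) := by
  refine exists_prod_eq_prod_mul_one_add _ _ _ _ fun ν hν => ?_
  rw [add_right_comm]
  exact qnum_add_natCast_mul p (isUnit_add_natCast p hθ' ha₀ (mem_filter.mp hν).2) k n

lemma Cq_eq_prod_filter_mul_phiR {θ θ' : ℤ_[p]} {a₀ A B : ℕ} (hθ' : p * θ' - θ = a₀)
    (ha₀ : a₀ < p) (hB : ∀ k, a₀ + p * k < A ↔ k < B) :
    Cq p θ A = (∏ ν ∈ (range A).filter (· % p ≠ a₀), qnum p (θ + ν)) *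
      (qnat p p ^ B * phiR p (Cq p θ' B)) := by
  have hfactor (k : ℕ) : qnum p (θ + (a₀ + p * k : ℕ)) = qnat p p * phi p (qnum p (θ' + k)) := by
    rw [phi_apply, ← qnum_natCast_mul]
    congr 1
    push_cast
    linear_combination -hθ'
  rw [Cq, prod_range_eq_prod_filter_mul_prod_residue _ ha₀ hB, Cq, ← phi_apply, map_prod]
  simp only [hfactor, prod_mul_distrib, prod_const, card_range]

lemma Cq_add_mul_eq_prod_filter_mul_phiR {θ θ' : ℤ_[p]} {a₀ a : ℕ} (hθ' : p * θ' - θ = a₀)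
    (ha₀ : a₀ < p) (ha : a < p) (μ : ℕ) :
    Cq p θ (a + μ * p) = (∏ ν ∈ (range (a + μ * p)).filter (· % p ≠ a₀), qnum p (θ + ν)) *
      qnat p p ^ (μ + if a₀ < a then 1 else 0) * phiR p (Cq p θ' μ) *
      phiR p (qnum p (θ' + μ)) ^ (if a₀ < a then 1 else 0) := by
  rw [Cq_eq_prod_filter_mul_phiR p hθ' ha₀ (residue_lt_iff μ ha ha₀), Cq_add,
    Cq_eq_qnum_pow p _ (by split_ifs <;> omega : (if a₀ < a then 1 else 0) ≤ 1), phiR_mul,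
    phiR_pow]
  ring

lemma one_add_qpow_mul_div_qnum {x : ℤ_[p]} (hx : x ≠ 0) (n : ℕ) :
    1 + ι p (qpow p x) * qnatQ p n / qnumQ p x = ι p (qnum p (x + n)) / ι p (qnum p x) := by
  rw [qnatQ, qnumQ, qnum_add, qnum_natCast, map_add, map_mul]
  field_simp [ι_ne_zero p (qnum_ne_zero p hx)]

/-- The paper's exponent `ρ(a+θ−pθ')` appears as `ρ(a−a₀)`, since `a₀ = pθ'−θ`. -/
theorem dwork_congruence_1_1 (θ θ' : ℤ_[p])
    (hθ : ∀ n : ℕ, θ + (n : ℤ_[p]) ≠ 0)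
    (a₀ : ℕ) (ha₀ : a₀ ≤ p - 1) (hθ' : (p : ℤ_[p]) * θ' - θ = (a₀ : ℤ_[p]))
    (μ s : ℕ) (m a : ℕ) (ha : a ≤ p - 1) :
    ∃ u r : R p, u = 1 + qnat p (p ^ (s + 1)) * r ∧
      ι p (Cq p θ (a + μ * p + m * p ^ (s + 1))) / ι p (phiR p (Cq p θ' (μ + m * p ^ s))) =
        ι p u * (ι p (Cq p θ (m * p ^ (s + 1))) / ι p (phiR p (Cq p θ' (m * p ^ s)))) *
          (ι p (Cq p θ (a + μ * p)) / ι p (phiR p (Cq p θ' μ))) *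
          phiQ p (1 + ι p (qpow p (θ' + (μ : ℤ_[p]))) * qnatQ p (m * p ^ s) /
              qnumQ p (θ' + (μ : ℤ_[p]))) ^
            (if 0 < (a : ℤ) - (a₀ : ℤ) then 1 else 0) := by
  have hp := (Fact.out : p.Prime).pos
  have hθ'ne := add_natCast_ne_zero_of_mul_sub p hθ' hθ
  have hθ'N (n : ℕ) : θ' + (m * p ^ s : ℕ) + n ≠ 0 := by
    rw [add_assoc, ← Nat.cast_add]
    exact hθ'ne _
  have hθN : p * (θ' + (m * p ^ s : ℕ)) - (θ + (m * p ^ (s + 1) : ℕ)) = a₀ := by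
    push_cast
    linear_combination hθ'
  obtain ⟨r, hr⟩ := exists_prod_filter_qnum_add_natCast_mul p hθ' (by omega) (a + μ * p) m
    (p ^ (s + 1))
  refine ⟨_, r, rfl, ?_⟩
  simp only [sub_pos, Nat.cast_lt]
  rw [add_comm _ (m * p ^ (s + 1)), Cq_add p θ, add_comm μ, Cq_add p θ', phiR_mul,
    Cq_add_mul_eq_prod_filter_mul_phiR p hθN (by omega) (by omega),
    Cq_add_mul_eq_prod_filter_mul_phiR p hθ' (by omega) (by omega), hr,
    one_add_qpow_mul_div_qnum p (hθ'ne μ), phiQ_div p _ _ (qnum_ne_zero p (hθ'ne μ)),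
    add_right_comm θ']
  have := ι_phiR_ne_zero p (Cq_ne_zero p hθ'ne (m * p ^ s))
  have := ι_phiR_ne_zero p (Cq_ne_zero p hθ'ne μ)
  have := ι_phiR_ne_zero p (Cq_ne_zero p hθ'N μ)
  have := ι_phiR_ne_zero p (qnum_ne_zero p (hθ'ne μ))
  simp only [map_mul, map_pow, div_pow]
  field_simp

end QDwork
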